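/- Let ω > 1 be real, m ≥ 0 an integer with r' = ⌊(m+2)/(ω+1)⌋. If (m+2)/(r'+1) ≥ √3 + 1, then g(r'+1) > g(r'+2) > ... > g(m), where g(r) = ω^{-r}·∑_{i=0}^{r} C(m,i). -/

import Mathlib

open Finset
set_option maxHeartbeats 1000000

lemma poly' (s R e : ℝ) (hs : s^2 = 3) (hs1 : 1 ≤ s) (hR : 1 ≤ R) (he : 0 ≤ e) :
    2*(R-1)*(((s+1)*R-2+e)-R+2)*(R*(R+1)) ≤
    ((((s+1)*R-2+e)-R)*(((s+1)*R-2+e)-R+1) + 2*(R+1)*(((s+1)*R-2+e)-R+1)) * (((s+1)*R-2+e)-2*R+3)^2 := by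
  have hs0 : (0:ℝ) ≤ s := by linarith
  have key : ((((s+1)*R-2+e)-R)*(((s+1)*R-2+e)-R+1) + 2*(R+1)*(((s+1)*R-2+e)-R+1)) * (((s+1)*R-2+e)-2*R+3)^2
      - 2*(R-1)*(((s+1)*R-2+e)-R+2)*(R*(R+1))
      = ((-2)*R + (-1)*R*s + R^2 + 2*R^2*s + 4*R^3 + 2*R^3*s + (-1)*e + 2*e*R + (-2)*e*R*s
        + 8*e*R^2 + 4*e*R^2*s + 6*e*R^3*s + (-1)*e^2 + 2*e^2*R + 3*e^2*R*s + 15*e^2*R^2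
        + e^3 + 4*e^3*R*s + e^4)
      + (s^2-3) * ((-1)*R^2 + 2*R^3 + R^3*s + R^4*s^2 + 3*e*R^2 + 4*e*R^3*s + 6*e^2*R^2) := by
    ring
  have hz : (s^2-3) * ((-1)*R^2 + 2*R^3 + R^3*s + R^4*s^2 + 3*e*R^2 + 4*e*R^3*s + 6*e^2*R^2) = 0 := by
    rw [hs]; ring
  rw [hz, add_zero] at key
  have t1 : (0:ℝ) ≤ e^4 := by positivity
  have t2 : (0:ℝ) ≤ e^3 := by positivity
  have t3 : (0:ℝ) ≤ 4*s*(e^3*R) := by positivity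
  have t4 : (0:ℝ) ≤ e^2*(15*R^2-1) := mul_nonneg (sq_nonneg e) (by nlinarith [sq_nonneg (R-1)])
  have t5 : (0:ℝ) ≤ (3*s+2)*(e^2*R) := by positivity
  have t6 : (0:ℝ) ≤ 6*s*(e*R^3) := by positivity
  have t7 : (0:ℝ) ≤ 2*s*(e*R*(R-1)) := by
    have : (0:ℝ) ≤ R - 1 := by linarith
    positivity
  have t8 : (0:ℝ) ≤ (2*s+8)*(e*R^2) := by positivity
  have t9 : (0:ℝ) ≤ e*(2*R-1) := by
    have : (0:ℝ) ≤ 2*R-1 := by linarith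
    positivity
  have t10 : (0:ℝ) ≤ (s+2)*(2*R^3-R) := by
    have : (0:ℝ) ≤ 2*R^3-R := by nlinarith
    positivity
  have t11 : (0:ℝ) ≤ (2*s+1)*R^2 := by positivity
  nlinarith [key, t1,t2,t3,t4,t5,t6,t7,t8,t9,t10,t11]

lemma poly (s M R : ℝ) (hs : s^2 = 3) (hs1 : 1 ≤ s) (hR : 1 ≤ R)
    (h3 : (s+1)*R ≤ M + 2) :
    2*(R-1)*(M-R+2)*(R*(R+1)) ≤ ((M-R)*(M-R+1) + 2*(R+1)*(M-R+1)) * (M-2*R+3)^2 := by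
  have := poly' s R (M+2-(s+1)*R) hs hs1 hR (by linarith)
  calc 2*(R-1)*(M-R+2)*(R*(R+1)) = 2*(R-1)*(((s+1)*R-2+(M+2-(s+1)*R))-R+2)*(R*(R+1)) := by ring
  _ ≤ _ := by refine le_trans this (le_of_eq ?_); ring

lemma choose_id (m i : ℕ) :
    ((i:ℝ)+1) * (m.choose (i+1)) = ((m:ℝ) - i) * m.choose i := by
  rcases le_or_gt (i+1) m with hle | hlt
  · have h := Nat.choose_succ_right_eq m i
    have h2 : ((m.choose (i+1) * (i+1) : ℕ) : ℝ) = ((m.choose i * (m-i) : ℕ) : ℝ) := by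
      exact_mod_cast h
    have hi : i ≤ m := by omega
    push_cast [Nat.cast_sub hi] at h2
    linarith
  · rcases eq_or_lt_of_le (Nat.lt_succ_iff.mp hlt) with heq | hlt2
    · subst heq
      rw [Nat.choose_eq_zero_of_lt (by omega)]
      push_cast; ring
    · rw [Nat.choose_eq_zero_of_lt (by omega), Nat.choose_eq_zero_of_lt hlt2]
      push_cast; ring

lemma sum_id (m : ℕ) : ∀ n : ℕ,
    ∑ i ∈ range (n+1), ((m:ℝ) - 2*i) * (m.choose i) = ((n:ℝ)+1) * m.choose (n+1) := by
  intro n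
  induction n with
  | zero => simp [Nat.choose_one_right]
  | succ n ih =>
    rw [Finset.sum_range_succ, ih]
    have h := choose_id m (n+1)
    push_cast at h ⊢
    linarith

lemma my_geom_id (q : ℝ) : ∀ n : ℕ,
    (1-q)^2 * (∑ j ∈ range n, (j:ℝ) * q^j) = q - (n:ℝ)*q^n + ((n:ℝ)-1)*q^(n+1) := by
  intro n
  induction n with
  | zero => simp
  | succ n ih =>
    rw [Finset.sum_range_succ, mul_add, ih]
    push_cast
    ring

lemma my_geom_le (q : ℝ) (h0 : 0 ≤ q) (h1 : q < 1) (n : ℕ) :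
    (1-q)^2 * (∑ j ∈ range n, (j:ℝ) * q^j) ≤ q := by
  rw [my_geom_id]
  have hq : q^(n+1) ≤ q^n := pow_le_pow_of_le_one h0 (le_of_lt h1) (by omega)
  have hqn : 0 ≤ q^n := pow_nonneg h0 n
  have hqn1 : 0 ≤ q^(n+1) := pow_nonneg h0 (n+1)
  rcases Nat.eq_zero_or_pos n with h | h
  · subst h; simp; nlinarith
  · have hn1 : (1:ℝ) ≤ (n:ℝ) := by exact_mod_cast h
    nlinarith [mul_le_mul_of_nonneg_left hq (by linarith : (0:ℝ) ≤ (n:ℝ)-1)]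

-- single ratio step: c (i-1) ≤ q * c i stated as c i ≤ q * c (i+1) for i+1 ≤ k
lemma chain_step (m k i : ℕ) (hik : i + 1 ≤ k) (hkm : k + 1 ≤ m) :
    (m.choose i : ℝ) ≤ ((k:ℝ)/((m:ℝ)-k+1)) * m.choose (i+1) := by
  have hd : (0:ℝ) < (m:ℝ)-k+1 := by
    have : (k:ℝ) ≤ (m:ℝ) := by exact_mod_cast Nat.le_of_succ_le hkm
    linarith
  have hd2 : (0:ℝ) < (m:ℝ)-i := by
    have : (i:ℝ) + 1 ≤ (m:ℝ) := by exact_mod_cast le_trans hik (Nat.le_of_succ_le hkm)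
    linarith
  have h := choose_id m i
  have hc1 : (0:ℝ) ≤ m.choose (i+1) := Nat.cast_nonneg _
  rw [div_mul_eq_mul_div, le_div_iff₀ hd]
  have hik' : (i:ℝ) + 1 ≤ (k:ℝ) := by exact_mod_cast hik
  nlinarith [mul_le_mul_of_nonneg_right hik' hc1]

lemma chain (m k : ℕ) (hkm : k + 1 ≤ m) : ∀ j : ℕ, j ≤ k →
    (m.choose (k-j) : ℝ) ≤ ((k:ℝ)/((m:ℝ)-k+1))^j * m.choose k := by
  have hq0 : (0:ℝ) ≤ (k:ℝ)/((m:ℝ)-k+1) := by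
    apply div_nonneg (Nat.cast_nonneg _)
    have : (k:ℝ) ≤ (m:ℝ) := by exact_mod_cast Nat.le_of_succ_le hkm
    linarith
  intro j
  induction j with
  | zero => simp
  | succ j ih =>
    intro hj
    have hj' : j ≤ k := by omega
    have h1 : k - (j+1) + 1 = k - j := by omega
    have h2 := chain_step m k (k-(j+1)) (by omega) hkm
    rw [h1] at h2
    calc (m.choose (k-(j+1)) : ℝ) ≤ ((k:ℝ)/((m:ℝ)-k+1)) * m.choose (k-j) := h2
    _ ≤ ((k:ℝ)/((m:ℝ)-k+1)) * (((k:ℝ)/((m:ℝ)-k+1))^j * m.choose k) :=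
        mul_le_mul_of_nonneg_left (ih hj') hq0
    _ = ((k:ℝ)/((m:ℝ)-k+1))^(j+1) * m.choose k := by ring

lemma stepA (m k : ℕ) :
    ((m:ℝ) + 2 - 2*((k:ℝ)+1)) * (∑ i ∈ range (k+2), (m.choose i : ℝ))
      = ((k:ℝ)+2) * (m.choose (k+2) : ℝ)
        + 2 * ((m.choose (k+1) : ℝ) - ∑ i ∈ range k, ((k:ℝ) - i) * (m.choose i : ℝ)) := by
  have e1 : ((m:ℝ) + 2 - 2*((k:ℝ)+1)) * (∑ i ∈ range (k+2), (m.choose i : ℝ))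
      = (∑ i ∈ range (k+2), ((m:ℝ) - 2*i) * (m.choose i : ℝ))
        + 2 * (∑ i ∈ range (k+2), ((i:ℝ)+1-((k:ℝ)+1)) * (m.choose i : ℝ)) := by
    rw [Finset.mul_sum, Finset.mul_sum, ← Finset.sum_add_distrib]
    apply Finset.sum_congr rfl
    intro i _
    ring
  have e2 : (∑ i ∈ range (k+2), ((m:ℝ) - 2*i) * (m.choose i : ℝ))
      = ((k:ℝ)+2) * (m.choose (k+2) : ℝ) := by
    have h := sum_id m (k+1)
    push_cast at h
    have : ((k:ℝ)+2) = ((k:ℝ)+1+1) := by ring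
    rw [this, show k+2 = k+1+1 from rfl]
    exact h
  have e3 : (∑ i ∈ range (k+2), ((i:ℝ)+1-((k:ℝ)+1)) * (m.choose i : ℝ))
      = (m.choose (k+1) : ℝ) - ∑ i ∈ range k, ((k:ℝ) - i) * (m.choose i : ℝ) := by
    rw [Finset.sum_range_succ, Finset.sum_range_succ]
    have e4 : (∑ i ∈ range k, ((i:ℝ)+1-((k:ℝ)+1)) * (m.choose i : ℝ))
        = - ∑ i ∈ range k, ((k:ℝ) - i) * (m.choose i : ℝ) := by
      rw [← Finset.sum_neg_distrib]
      apply Finset.sum_congr rfl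
      intro i _
      ring
    rw [e4]
    push_cast
    ring
  rw [e1, e2, e3]

lemma stepC (m k : ℕ) (hkm : k + 1 ≤ m) (hq1 : (k:ℝ)/((m:ℝ)-k+1) < 1) :
    (∑ i ∈ range k, ((k:ℝ) - i) * (m.choose i : ℝ))
      ≤ (((k:ℝ)/((m:ℝ)-k+1)) / (1-(k:ℝ)/((m:ℝ)-k+1))^2) * (m.choose k : ℝ) := by
  have hKm : (k:ℝ) + 1 ≤ (m:ℝ) := by exact_mod_cast hkm
  have hd1 : (0:ℝ) < (m:ℝ) - k + 1 := by linarith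
  have hq0 : (0:ℝ) ≤ (k:ℝ)/((m:ℝ)-k+1) := div_nonneg (Nat.cast_nonneg k) (le_of_lt hd1)
  set q : ℝ := (k:ℝ)/((m:ℝ)-k+1) with hq
  have tle : (∑ i ∈ range k, ((k:ℝ) - i) * (m.choose i : ℝ))
      ≤ ∑ i ∈ range k, ((k-i : ℕ):ℝ) * q^(k-i) * (m.choose k : ℝ) := by
    apply Finset.sum_le_sum
    intro i hi
    have hik : i ≤ k := le_of_lt (Finset.mem_range.mp hi)
    have hch := chain m k hkm (k - i) (by omega)
    have hki : k - (k - i) = i := by omega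
    rw [hki] at hch
    have hw : ((k - i : ℕ):ℝ) = (k:ℝ) - i := by
      rw [Nat.cast_sub hik]
    rw [hw]
    have hwnn : (0:ℝ) ≤ (k:ℝ) - i := by
      rw [← hw]; exact Nat.cast_nonneg _
    calc ((k:ℝ) - i) * (m.choose i : ℝ) ≤ ((k:ℝ) - i) * (q^(k-i) * (m.choose k : ℝ)) :=
        mul_le_mul_of_nonneg_left hch hwnn
    _ = ((k:ℝ) - i) * q^(k-i) * (m.choose k : ℝ) := by ring
  have refl : (∑ i ∈ range (k+1), ((k-i : ℕ):ℝ) * q^(k-i)) = ∑ j ∈ range (k+1), (j:ℝ) * q^j := by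
    exact Finset.sum_range_reflect (fun j => (j:ℝ) * q^j) (k+1)
  have sumeq : (∑ i ∈ range k, ((k-i : ℕ):ℝ) * q^(k-i) * (m.choose k : ℝ))
      = (∑ j ∈ range (k+1), (j:ℝ) * q^j) * (m.choose k : ℝ) := by
    rw [← Finset.sum_mul, ← refl, Finset.sum_range_succ]
    simp
  have hgeom : (∑ j ∈ range (k+1), (j:ℝ) * q^j) ≤ q / (1-q)^2 := by
    have h1q : (0:ℝ) < (1-q)^2 := by nlinarith
    rw [le_div_iff₀ h1q]
    have h := my_geom_le q hq0 hq1 (k+1)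
    linarith
  calc (∑ i ∈ range k, ((k:ℝ) - i) * (m.choose i : ℝ))
      ≤ ∑ i ∈ range k, ((k-i : ℕ):ℝ) * q^(k-i) * (m.choose k : ℝ) := tle
  _ = (∑ j ∈ range (k+1), (j:ℝ) * q^j) * (m.choose k : ℝ) := sumeq
  _ ≤ (q / (1-q)^2) * (m.choose k : ℝ) :=
      mul_le_mul_of_nonneg_right hgeom (Nat.cast_nonneg _)

lemma stepD (m k : ℕ) (hkm : k + 2 ≤ m)
    (h3 : (Real.sqrt 3 + 1) * ((k:ℝ)+1) ≤ (m:ℝ) + 2) :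
    2 * ((((k:ℝ)/((m:ℝ)-k+1)) / (1-(k:ℝ)/((m:ℝ)-k+1))^2) * (m.choose k : ℝ))
      ≤ (m.choose (k+2) : ℝ) + 2 * (m.choose (k+1) : ℝ) := by
  have hs3 : Real.sqrt 3 ^ 2 = 3 := Real.sq_sqrt (by norm_num)
  have hs0 : (0:ℝ) ≤ Real.sqrt 3 := Real.sqrt_nonneg 3
  have hs1 : (1:ℝ) < Real.sqrt 3 := by nlinarith
  have hK0 : (0:ℝ) ≤ (k:ℝ) := Nat.cast_nonneg k
  have hKm : (k:ℝ) + 2 ≤ (m:ℝ) := by exact_mod_cast hkm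
  have h2k : 2*(k:ℝ) < (m:ℝ) := by nlinarith
  have hd1 : (0:ℝ) < (m:ℝ) - k + 1 := by linarith
  have hd2 : (0:ℝ) < (m:ℝ) - 2*k + 1 := by linarith
  have rel1 : ((k:ℝ)+1) * (m.choose (k+1) : ℝ) = ((m:ℝ) - k) * (m.choose k : ℝ) := by
    have h := choose_id m k
    push_cast at h ⊢
    linarith
  have rel2 : ((k:ℝ)+2) * (m.choose (k+2) : ℝ) = ((m:ℝ) - k - 1) * (m.choose (k+1) : ℝ) := by
    have h := choose_id m (k+1)
    push_cast at h ⊢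
    linarith
  have hckpos : (0:ℝ) < (m.choose k : ℝ) := by
    exact_mod_cast Nat.choose_pos (by omega : k ≤ m)
  have hq_eq : (((k:ℝ)/((m:ℝ)-k+1)) / (1-(k:ℝ)/((m:ℝ)-k+1))^2)
      = ((k:ℝ) * ((m:ℝ) - k + 1)) / ((m:ℝ) - 2*k + 1)^2 := by
    have h1mq : 1 - (k:ℝ)/((m:ℝ)-k+1) = ((m:ℝ) - 2*k + 1)/((m:ℝ) - k + 1) := by
      field_simp
      ring
    rw [h1mq]
    rw [div_pow, div_div_div_eq]
    rw [div_eq_div_iff (by positivity) (by positivity)]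
    ring
  have hpoly := poly (Real.sqrt 3) (m:ℝ) ((k:ℝ)+1) hs3 (le_of_lt hs1) (by linarith) h3
  have ident : ((k:ℝ)+1)*((k:ℝ)+2)*((m.choose (k+2) : ℝ) + 2*(m.choose (k+1) : ℝ))
      = (((m:ℝ)-k-1)*((m:ℝ)-k) + 2*((k:ℝ)+2)*((m:ℝ)-k)) * (m.choose k : ℝ) := by
    linear_combination ((k:ℝ)+1) * rel2 + (((m:ℝ)-k-1) + 2*((k:ℝ)+2)) * rel1
  rw [hq_eq]
  have hpos2 : (0:ℝ) < ((m:ℝ) - 2*k + 1)^2 := by positivity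
  rw [div_mul_eq_mul_div, ← sub_nonneg]
  have hfrac : (m.choose (k+2) : ℝ) + 2 * (m.choose (k+1) : ℝ)
        - 2 * ((k:ℝ) * ((m:ℝ) - k + 1) * (m.choose k : ℝ) / ((m:ℝ) - 2*k + 1)^2)
      = (((m.choose (k+2) : ℝ) + 2 * (m.choose (k+1) : ℝ)) * ((m:ℝ) - 2*k + 1)^2
          - 2 * ((k:ℝ) * ((m:ℝ) - k + 1) * (m.choose k : ℝ))) / ((m:ℝ) - 2*k + 1)^2 := by
    field_simp
  rw [hfrac]
  apply div_nonneg _ (le_of_lt hpos2)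
  have hpoly' : 2*(k:ℝ)*((m:ℝ) - k + 1)*(((k:ℝ)+1)*((k:ℝ)+2))
      ≤ (((m:ℝ)-k-1)*((m:ℝ)-k) + 2*((k:ℝ)+2)*((m:ℝ)-k)) * ((m:ℝ)-2*k+1)^2 := by
    calc 2*(k:ℝ)*((m:ℝ) - k + 1)*(((k:ℝ)+1)*((k:ℝ)+2))
        = 2*(((k:ℝ)+1)-1)*((m:ℝ)-((k:ℝ)+1)+2)*(((k:ℝ)+1)*(((k:ℝ)+1)+1)) := by ring
    _ ≤ (((m:ℝ)-((k:ℝ)+1))*((m:ℝ)-((k:ℝ)+1)+1) + 2*(((k:ℝ)+1)+1)*((m:ℝ)-((k:ℝ)+1)+1))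
          * ((m:ℝ)-2*((k:ℝ)+1)+3)^2 := hpoly
    _ = (((m:ℝ)-k-1)*((m:ℝ)-k) + 2*((k:ℝ)+2)*((m:ℝ)-k)) * ((m:ℝ)-2*k+1)^2 := by ring
  have hstep := mul_le_mul_of_nonneg_right hpoly' (le_of_lt hckpos)
  have hKK : (0:ℝ) < ((k:ℝ)+1)*((k:ℝ)+2) := by nlinarith
  have key2 : ((((m.choose (k+2) : ℝ) + 2 * (m.choose (k+1) : ℝ)) * ((m:ℝ) - 2*k + 1)^2
          - 2 * ((k:ℝ) * ((m:ℝ) - k + 1) * (m.choose k : ℝ)))) * (((k:ℝ)+1)*((k:ℝ)+2))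
      = (((m:ℝ)-k-1)*((m:ℝ)-k) + 2*((k:ℝ)+2)*((m:ℝ)-k)) * ((m:ℝ)-2*k+1)^2 * (m.choose k : ℝ)
        - 2*(k:ℝ)*((m:ℝ) - k + 1)*(((k:ℝ)+1)*((k:ℝ)+2)) * (m.choose k : ℝ) := by
    linear_combination ((m:ℝ) - 2*k + 1)^2 * ident
  nlinarith [hstep, key2, hKK]

lemma baseL (m ρ : ℕ) (h1 : 1 ≤ ρ) (h2 : ρ + 1 ≤ m)
    (h3 : (Real.sqrt 3 + 1) * ρ ≤ (m:ℝ) + 2) :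
    (ρ:ℝ) * (m.choose (ρ+1)) ≤ ((m:ℝ) + 2 - 2*ρ) * ∑ i ∈ range (ρ+1), (m.choose i : ℝ) := by
  obtain ⟨k, rfl⟩ : ∃ k, ρ = k + 1 := ⟨ρ - 1, by omega⟩
  have hs3 : Real.sqrt 3 ^ 2 = 3 := Real.sq_sqrt (by norm_num)
  have hs0 : (0:ℝ) ≤ Real.sqrt 3 := Real.sqrt_nonneg 3
  have hs1 : (1:ℝ) < Real.sqrt 3 := by nlinarith
  have hc3 : (Real.sqrt 3 + 1) * ((k:ℝ)+1) ≤ (m:ℝ) + 2 := by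
    push_cast at h3
    linarith
  have hkm2 : k + 2 ≤ m := by omega
  have hKm : (k:ℝ) + 2 ≤ (m:ℝ) := by exact_mod_cast hkm2
  have hK0 : (0:ℝ) ≤ (k:ℝ) := Nat.cast_nonneg k
  have h2k : 2*(k:ℝ) < (m:ℝ) := by nlinarith
  have hd1 : (0:ℝ) < (m:ℝ) - k + 1 := by linarith
  have hq1 : (k:ℝ)/((m:ℝ)-k+1) < 1 := by
    rw [div_lt_one hd1]; linarith
  have hA := stepA m k
  have hC := stepC m k (by omega) hq1
  have hD := stepD m k hkm2 hc3
  have hcnn2 : (0:ℝ) ≤ (m.choose (k+2) : ℝ) := Nat.cast_nonneg _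
  rw [show k+1+1 = k+2 from rfl]
  push_cast
  have h5 : ((k:ℝ)+1) * (m.choose (k+2) : ℝ) ≤ ((k:ℝ)+2) * (m.choose (k+2) : ℝ) := by
    nlinarith [hcnn2]
  linarith [hA, hC, hD, h5]

theorem stmt_12 (ω : ℝ) (hω : 1 < ω) (m : ℕ)
    (g : ℕ → ℝ)
    (hg : ∀ r, g r = (ω ^ r)⁻¹ * ∑ i ∈ Finset.range (r + 1), (Nat.choose m i : ℝ))
    (r' : ℕ) (hr' : r' = ⌊((m : ℝ) + 2) / (ω + 1)⌋₊)
    (h : ((m : ℝ) + 2) / ((r' : ℝ) + 1) ≥ Real.sqrt 3 + 1) :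
    ∀ r, r' + 1 ≤ r → r < m → g r > g (r + 1) := by
  have hω0 : (0:ℝ) < ω := by linarith
  have hω1 : (0:ℝ) < ω + 1 := by linarith
  set ρ := r' + 1 with hρ
  have hρpos : (0:ℝ) < (ρ:ℝ) := by positivity
  -- floor facts
  have hfl : ((m:ℝ)+2)/(ω+1) < (ρ:ℝ) := by
    have := Nat.lt_floor_add_one (((m:ℝ)+2)/(ω+1))
    rw [← hr'] at this
    push_cast [hρ]
    exact_mod_cast this
  have hflm : (m:ℝ) + 2 < (ω+1) * ρ := by
    rw [div_lt_iff₀ hω1] at hfl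
    linarith
  have hsq : (Real.sqrt 3 + 1) * ρ ≤ (m:ℝ) + 2 := by
    have hcast : ((r':ℝ)+1) = (ρ:ℝ) := by push_cast [hρ]; ring
    rw [hcast] at h
    rw [ge_iff_le, le_div_iff₀ hρpos] at h
    linarith
  have hSpos : ∀ n : ℕ, (0:ℝ) < ∑ i ∈ range (n+1), (m.choose i : ℝ) := by
    intro n
    apply Finset.sum_pos'
    · intro i _; exact Nat.cast_nonneg _
    · exact ⟨0, Finset.mem_range.mpr (by omega), by simp⟩
  have key : ∀ t : ℕ, ρ ≤ t →
      (m.choose (t+1) : ℝ) < (ω - 1) * ∑ i ∈ range (t+1), (m.choose i : ℝ) := by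
    intro t ht
    induction t, ht using Nat.le_induction with
    | base =>
      by_cases hm : ρ + 1 ≤ m
      · have hL := baseL m ρ (by omega) hm hsq
        have hmul : ((m:ℝ)+2-2*ρ) * (∑ i ∈ range (ρ+1), (m.choose i : ℝ))
            < ((ω-1)*ρ) * (∑ i ∈ range (ρ+1), (m.choose i : ℝ)) := by
          apply mul_lt_mul_of_pos_right _ (hSpos ρ)
          linarith
        have := lt_of_le_of_lt hL hmul
        have h2 : (ρ:ℝ) * (m.choose (ρ+1)) < (ρ:ℝ) * ((ω-1) * ∑ i ∈ range (ρ+1), (m.choose i : ℝ)) := by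
          calc (ρ:ℝ) * (m.choose (ρ+1)) < ((ω-1)*ρ) * (∑ i ∈ range (ρ+1), (m.choose i : ℝ)) := this
          _ = (ρ:ℝ) * ((ω-1) * ∑ i ∈ range (ρ+1), (m.choose i : ℝ)) := by ring
        exact lt_of_mul_lt_mul_left h2 (le_of_lt hρpos)
      · have : m.choose (ρ+1) = 0 := Nat.choose_eq_zero_of_lt (by omega)
        rw [this]
        push_cast
        have := hSpos ρ
        nlinarith
    | succ n hn ih =>
      rw [Finset.sum_range_succ _ (n+1)]
      have hcc : ((n:ℝ)+2) * (m.choose (n+2)) = ((m:ℝ)-(n+1)) * m.choose (n+1) := by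
        have := choose_id m (n+1)
        push_cast at this ⊢
        linarith
      have hρn : (ρ:ℝ) ≤ (n:ℝ) := by exact_mod_cast hn
      have hlin : (m:ℝ) - (n+1) ≤ ω * ((n:ℝ)+2) := by
        nlinarith [mul_le_mul_of_nonneg_left hρn (le_of_lt hω1)]
      have hcn : (0:ℝ) ≤ (m.choose (n+1) : ℝ) := Nat.cast_nonneg _
      have hfin : (m.choose (n+2) : ℝ) ≤ ω * m.choose (n+1) := by
        have hn2 : (0:ℝ) < (n:ℝ) + 2 := by positivity
        rw [← mul_le_mul_iff_right₀ hn2]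
        calc ((n:ℝ)+2) * (m.choose (n+2)) = ((m:ℝ)-(n+1)) * m.choose (n+1) := hcc
        _ ≤ (ω * ((n:ℝ)+2)) * m.choose (n+1) := mul_le_mul_of_nonneg_right hlin hcn
        _ = ((n:ℝ)+2) * (ω * m.choose (n+1)) := by ring
      push_cast at hfin ⊢
      nlinarith [ih]
  intro r hr hrm
  have hk := key r hr
  have hpow : (0:ℝ) < ω ^ (r+1) := by positivity
  have hgdiff : g r - g (r+1) = (ω^(r+1))⁻¹ *
      ((ω-1) * (∑ i ∈ range (r+1), (m.choose i : ℝ)) - m.choose (r+1)) := by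
    rw [hg r, hg (r+1), Finset.sum_range_succ _ (r+1)]
    have hne : ω ^ r ≠ 0 := by positivity
    have hne1 : ω ^ (r+1) ≠ 0 := by positivity
    field_simp
    ring
  have : 0 < g r - g (r+1) := by
    rw [hgdiff]
    apply mul_pos (by positivity)
    linarith
  linarith
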